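/- arXiv:1503.00108 — 12 statements merged into one kernel-verified Lean document; each statement's English description precedes it below -/
import Mathlib

section
/- Let I be a proper ideal of R and let φ be a function from the set of ideals of R to itself. Then I is a φ-n-absorbing primary ideal of R if and only if for all x₁, …, x_n ∈ R with x₁x₂⋯x_n ∉ √I, the ideal quotient (I : x₁x₂⋯x_n) is contained in the union (⋃_{i=1}^{n-1} (√I : x₁⋯x̂ᵢ⋯x_n)) ∪ (I : x₁x₂⋯x_{n-1}) ∪ (φ(I) : x₁x₂⋯x_n). -/
/-- A proper ideal `I` is `φ`-`n`-absorbing primary: whenever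
`a₁ ⋯ a_{n+1} ∈ I \ φ I`, either `a₁ ⋯ a_n ∈ I` or the product of `a_{n+1}`
with `n - 1` of `a₁, …, a_n` lies in `√I`. -/
def IsPhiNAbsorbingPrimary {R : Type*} [CommRing R] (φ : Ideal R → Ideal R) (n : ℕ)
    (I : Ideal R) : Prop :=
  I ≠ ⊤ ∧ ∀ a : Fin (n + 1) → R,
    (∏ i, a i) ∈ I → (∏ i, a i) ∉ φ I →
      ((∏ i : Fin n, a i.castSucc) ∈ I ∨
        ∃ i : Fin n, (∏ j ∈ Finset.univ.erase i.castSucc, a j) ∈ I.radical)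

/-!
Put `r` in front of `x₁, …, xₙ`. For the tuple `(r, x₁, …, xₙ)` the absorbing condition says: if
`r x₁ ⋯ xₙ ∈ I \ φ(I)` then `r x₁ ⋯ x_{n-1} ∈ I`, or `x₁ ⋯ xₙ ∈ √I` (omitting `r`), or
`r x₁ ⋯ x̂ᵢ ⋯ xₙ ∈ √I` for some `i < n`. Once `x₁ ⋯ xₙ ∉ √I` rules out the middle case, this is
exactly the statement that `r ∈ (I : x₁ ⋯ xₙ)` lies in one of the colon ideals of the union.
-/

open Finset

namespace Fin

variable {M : Type*} [CommMonoid M] {m : ℕ}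

lemma prod_univ_erase (f : Fin (m + 1) → M) (p : Fin (m + 1)) :
    ∏ j ∈ univ.erase p, f j = ∏ j : Fin m, f (p.succAbove j) := by
  rw [univ_succAbove m p, erase_cons, prod_map]
  rfl

lemma prod_univ_erase_succ (f : Fin (m + 2) → M) (i : Fin (m + 1)) :
    ∏ j ∈ univ.erase i.succ, f j = f 0 * ∏ j ∈ univ.erase i, f j.succ := by
  simp only [prod_univ_erase, prod_univ_succ, succ_succAbove_zero, succ_succAbove_succ]

lemma prod_univ_erase_zero (f : Fin (m + 1) → M) :
    ∏ j ∈ univ.erase 0, f j = ∏ j : Fin m, f j.succ := by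
  simp only [prod_univ_erase, succAbove_zero]

lemma prod_cons_castSucc (r : M) (f : Fin (m + 1) → M) :
    ∏ i : Fin (m + 1), (cons r f : Fin (m + 2) → M) i.castSucc =
      r * ∏ j : Fin m, f j.castSucc := by
  simp only [prod_univ_succ, castSucc_zero, cons_zero, ← succ_castSucc, cons_succ]

lemma prod_filter_val_lt (f : Fin (m + 1) → M) :
    ∏ j ∈ univ.filter (fun j : Fin (m + 1) => (j : ℕ) < m), f j =
      ∏ j : Fin m, f j.castSucc := by
  have : univ.filter (fun j : Fin (m + 1) => (j : ℕ) < m) = univ.erase (last m) := by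
    ext j
    simp [Fin.ext_iff, Nat.lt_iff_le_and_ne, j.is_le]
  rw [this, prod_univ_erase]
  simp

end Fin

lemma isPhiNAbsorbingPrimary_succ_iff {R : Type*} [CommRing R] {φ : Ideal R → Ideal R} {m : ℕ}
    {I : Ideal R} :
    IsPhiNAbsorbingPrimary φ (m + 1) I ↔ I ≠ ⊤ ∧ ∀ (r : R) (x : Fin (m + 1) → R),
      r * ∏ i, x i ∈ I → r * ∏ i, x i ∉ φ I →
        r * ∏ j : Fin m, x j.castSucc ∈ I ∨ ∏ i, x i ∈ I.radical ∨
          ∃ j : Fin m, r * ∏ k ∈ univ.erase j.castSucc, x k ∈ I.radical := by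
  rw [IsPhiNAbsorbingPrimary, Fin.forall_fin_succ_pi]
  simp only [Fin.prod_cons, Fin.prod_cons_castSucc, Fin.exists_fin_succ, Fin.castSucc_zero,
    Fin.prod_univ_erase_zero, ← Fin.succ_castSucc, Fin.prod_univ_erase_succ, Fin.cons_zero,
    Fin.cons_succ]

lemma mem_absorbing_colon_union_iff {R : Type*} [CommRing R] {φ : Ideal R → Ideal R} {m : ℕ}
    {I : Ideal R} (x : Fin (m + 1) → R) (r : R) :
    r ∈ (⋃ (i : Fin (m + 1)) (_ : (i : ℕ) + 1 < m + 1),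
              (↑(Submodule.colon I.radical (Ideal.span {∏ j ∈ univ.erase i, x j})) : Set R)) ∪
            (↑(Submodule.colon I
                (Ideal.span {∏ j ∈ univ.filter (fun j : Fin (m + 1) => (j : ℕ) + 1 < m + 1), x j}))
              : Set R) ∪
            (↑(Submodule.colon (φ I) (Ideal.span {∏ i, x i})) : Set R) ↔
      (∃ j : Fin m, r * ∏ k ∈ univ.erase j.castSucc, x k ∈ I.radical) ∨
        r * ∏ j : Fin m, x j.castSucc ∈ I ∨ r * ∏ i, x i ∈ φ I := by
  simp [Fin.prod_filter_val_lt, Fin.exists_fin_succ', or_assoc]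

theorem stmt_0_general {R : Type*} [CommRing R] (n : ℕ) (hn : 0 < n)
    (φ : Ideal R → Ideal R) (I : Ideal R) (hI : I ≠ ⊤) :
    IsPhiNAbsorbingPrimary φ n I ↔
      ∀ x : Fin n → R, (∏ i, x i) ∉ I.radical →
        (↑(Submodule.colon I (Ideal.span {∏ i, x i})) : Set R) ⊆
          (⋃ (i : Fin n) (_ : (i : ℕ) + 1 < n),
              (↑(Submodule.colon I.radical
                  (Ideal.span {∏ j ∈ Finset.univ.erase i, x j})) : Set R)) ∪
            (↑(Submodule.colon I
                (Ideal.span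
                  {∏ j ∈ Finset.univ.filter (fun j : Fin n => (j : ℕ) + 1 < n), x j})) : Set R) ∪
            (↑(Submodule.colon (φ I) (Ideal.span {∏ i, x i})) : Set R) := by
  obtain ⟨m, rfl⟩ := Nat.exists_eq_add_one_of_ne_zero hn.ne'
  simp only [isPhiNAbsorbingPrimary_succ_iff, Set.subset_def, mem_absorbing_colon_union_iff,
    SetLike.mem_coe, Ideal.mem_colon_span_singleton, hI, ne_eq, not_false_eq_true, true_and]
  constructor
  · intro h x hx r hr
    have := h r x hr
    tauto
  · intro h r x hr hrφ
    by_cases hx : ∏ i, x i ∈ I.radical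
    · tauto
    · have := h x hx r hr
      tauto

/-- Theorem 2.3: `I` is `φ`-`n`-absorbing primary iff for all `x₁, …, xₙ` with
`x₁ ⋯ xₙ ∉ √I`, `(I : x₁ ⋯ xₙ)` is contained in the union
`(⋃_{i=1}^{n-1} (√I : x₁ ⋯ x̂ᵢ ⋯ xₙ)) ∪ (I : x₁ ⋯ x_{n-1}) ∪ (φ(I) : x₁ ⋯ xₙ)`. -/
theorem stmt_0 {R : Type*} [CommRing R] [Nontrivial R] (n : ℕ) (hn : 0 < n)
    (φ : Ideal R → Ideal R) (hφ : ∀ J : Ideal R, φ J ≤ J) (I : Ideal R) (hI : I ≠ ⊤) :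
    IsPhiNAbsorbingPrimary φ n I ↔
      ∀ x : Fin n → R, (∏ i, x i) ∉ I.radical →
        (↑(Submodule.colon I (Ideal.span {∏ i, x i})) : Set R) ⊆
          (⋃ (i : Fin n) (_ : (i : ℕ) + 1 < n),
              (↑(Submodule.colon I.radical
                  (Ideal.span {∏ j ∈ Finset.univ.erase i, x j})) : Set R)) ∪
            (↑(Submodule.colon I
                (Ideal.span
                  {∏ j ∈ Finset.univ.filter (fun j : Fin n => (j : ℕ) + 1 < n), x j})) : Set R) ∪
            (↑(Submodule.colon (φ I) (Ideal.span {∏ i, x i})) : Set R) :=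
  stmt_0_general n hn φ I hI
end

section
/- If I is a φ-n-absorbing primary ideal of R such that √(φ(I)) = φ(√I), then √I is a φ-n-absorbing ideal of R. -/
/-- A proper ideal `P` is `φ`-`n`-absorbing: whenever `a₁ ⋯ a_{n+1} ∈ P \ φ P`,
some product of `n` of the `aᵢ`'s lies in `P`. -/
def IsPhiNAbsorbing {R : Type*} [CommRing R] (φ : Ideal R → Ideal R) (n : ℕ)
    (P : Ideal R) : Prop :=
  P ≠ ⊤ ∧ ∀ a : Fin (n + 1) → R,
    (∏ i, a i) ∈ P → (∏ i, a i) ∉ φ P →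
      ∃ i : Fin (n + 1), (∏ j ∈ Finset.univ.erase i, a j) ∈ P

open Finset

theorem Fin.prod_univ_erase_last {M : Type*} [CommMonoid M] {n : ℕ} (f : Fin (n + 1) → M) :
    ∏ j ∈ univ.erase (last n), f j = ∏ i : Fin n, f i.castSucc := by
  have : univ.erase (last n) = univ.map castSuccEmb := by ext; simp [Fin.exists_castSucc_eq]
  rw [this, prod_map]
  rfl

theorem Ideal.prod_mem_radical_of_prod_pow_mem {R ι : Type*} [CommSemiring R] {I : Ideal R}
    {s : Finset ι} {a : ι → R} {m : ℕ} (h : ∏ i ∈ s, a i ^ m ∈ I) :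
    ∏ i ∈ s, a i ∈ I.radical :=
  ⟨m, by rwa [← prod_pow]⟩

theorem stmt_1_general {R : Type*} [CommRing R] (n : ℕ)
    (φ : Ideal R → Ideal R) (I : Ideal R)
    (hrad : (φ I).radical = φ I.radical)
    (hI : IsPhiNAbsorbingPrimary φ n I) :
    IsPhiNAbsorbing φ n I.radical := by
  obtain ⟨hI_ne_top, hI_primary⟩ := hI
  refine ⟨by rwa [Ne, Ideal.radical_eq_top], fun a ⟨m, hm⟩ ha_notMem => ?_⟩
  have hpow_notMem : ∏ i, a i ^ m ∉ φ I := fun h =>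
    ha_notMem (hrad ▸ Ideal.prod_mem_radical_of_prod_pow_mem h)
  rcases hI_primary (a · ^ m) (by rwa [prod_pow]) hpow_notMem with h | ⟨i, h⟩
  · refine ⟨Fin.last n, ?_⟩
    rw [Fin.prod_univ_erase_last]
    exact Ideal.prod_mem_radical_of_prod_pow_mem h
  · exact ⟨i.castSucc, I.radical_idem ▸ Ideal.prod_mem_radical_of_prod_pow_mem h⟩

theorem stmt_1 {R : Type*} [CommRing R] [Nontrivial R] (n : ℕ) (hn : 0 < n)
    (φ : Ideal R → Ideal R) (hφ : ∀ J : Ideal R, φ J ≤ J) (I : Ideal R)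
    (hrad : (φ I).radical = φ I.radical)
    (hI : IsPhiNAbsorbingPrimary φ n I) :
    IsPhiNAbsorbing φ n I.radical :=
  stmt_1_general n φ I hrad hI
end

section
/- Let φ be a function from the set of ideals of R to itself that reverses inclusions, i.e. J ⊆ K implies φ(K) ⊆ φ(J). Suppose that for every 1 ≤ i ≤ k, Iᵢ is a φ-nᵢ-absorbing primary ideal of R such that √(Iᵢ) is a φ-nᵢ-absorbing ideal of R, and set n = n₁ + n₂ + ⋯ + n_k. Then both I₁ ∩ I₂ ∩ ⋯ ∩ I_k and the product I₁I₂⋯I_k are φ-n-absorbing primary ideals of R. -/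
/-!
Let `∏ Iᵢ ≤ J ≤ Iⱼ` for all `j` (the intersection and the product are both such `J`), and let
`a₀ ⋯ aₙ`, `n = ∑ nᵢ`, have product in `J \ φ J`. As `φ` reverses inclusions, the product also
avoids `φ Iᵢ` and `φ √Iᵢ`, so, `√Iᵢ` being `φ`-`nᵢ`-absorbing, it absorbs the product over some
set `Tᵢ` of exactly `nᵢ` of the indices. Either some index `t < n` lies in no `Tᵢ`, and then the
product omitting `aₜ` lies in every `√Iᵢ`, hence in `√J`; or, by counting, the `Tᵢ` partition
`{0, …, n - 1}`. In that case the primary condition for `Iᵢ` applied to `Tᵢ` gives either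
`∏_{Tᵢ} a ∈ Iᵢ` — and if this holds for all `i` then `a₀ ⋯ aₙ₋₁ ∈ ∏ Iᵢ ≤ J` — or a product omitting
one `aₜ`, `t ∈ Tᵢ`, that lies in `√Iᵢ`; it also lies in `√Iₗ` for `l ≠ i` because `t ∉ Tₗ`.
-/

open Finset Function

theorem Finset.exists_fin_embedding_map_univ_eq {ι : Type*} {n : ℕ} {T : Finset ι} (hT : #T = n) :
    ∃ e : Fin n ↪ ι, univ.map e = T := by
  subst hT
  refine ⟨T.equivFin.symm.toEmbedding.trans (.subtype _), ext fun y => ?_⟩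
  simpa using ⟨fun ⟨a, ha⟩ => ha ▸ (T.equivFin.symm a).2, fun hy => ⟨T.equivFin ⟨y, hy⟩, by simp⟩⟩

section Tuples

variable {M ι : Type*} [CommMonoid M] [DecidableEq ι] {n : ℕ}

theorem Finset.prod_erase_eq_prod_update_one {s : Finset ι} {a : ι} (ha : a ∈ s) (f : ι → M) :
    ∏ i ∈ s.erase a, f i = ∏ i ∈ s, update f a 1 i := by
  rw [prod_update_of_mem ha, one_mul, sdiff_singleton_eq_erase]

theorem Fin.prod_erase_last (f : Fin (n + 1) → M) :
    ∏ i ∈ univ.erase (Fin.last n), f i = ∏ i : Fin n, f i.castSucc := by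
  rw [← compl_singleton, ← Fin.image_castSucc,
    prod_image fun _ _ _ _ h => Fin.castSucc_injective _ h]

/-- Applying the `(n + 1)`-ary conditions to this tuple turns them into statements about
sub-products of `∏ i ∈ s, x i`. -/
def packTuple (x : ι → M) (s : Finset ι) (e : Fin n ↪ ι) : Fin (n + 1) → M :=
  Fin.snoc (x ∘ e) (∏ i ∈ s \ univ.map e, x i)

variable {x : ι → M} {s : Finset ι} {e : Fin n ↪ ι}

theorem prod_packTuple (he : univ.map e ⊆ s) : ∏ i, packTuple x s e i = ∏ i ∈ s, x i := by
  rw [Fin.prod_univ_castSucc, ← prod_sdiff he, mul_comm]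
  simp [packTuple, prod_map]

theorem prod_castSucc_packTuple :
    ∏ i : Fin n, packTuple x s e i.castSucc = ∏ i ∈ univ.map e, x i := by
  simp [packTuple, prod_map]

theorem prod_erase_castSucc_packTuple (he : univ.map e ⊆ s) (i : Fin n) :
    ∏ j ∈ univ.erase i.castSucc, packTuple x s e j = ∏ j ∈ s.erase (e i), x j := by
  -- Omitting an entry is replacing it by `1`, and that commutes with `Fin.snoc`.
  have hes : e i ∈ s := he (mem_map_of_mem _ (mem_univ i))
  have hrest : ∏ j ∈ s \ univ.map e, x j = ∏ j ∈ s \ univ.map e, update x (e i) 1 j :=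
    (prod_update_of_notMem (fun h => (mem_sdiff.1 h).2 (mem_map_of_mem _ (mem_univ i))) _ _).symm
  rw [prod_erase_eq_prod_update_one (mem_univ _), prod_erase_eq_prod_update_one hes,
    ← prod_packTuple he, packTuple, packTuple, ← Fin.snoc_update, hrest,
    ← update_comp_eq_of_injective x e.injective]

end Tuples

section Cardinality

variable {ι α : Type*} [DecidableEq α] {s : Finset ι} {t : ι → Finset α}

theorem Finset.pairwiseDisjoint_of_sum_card_le_card_biUnion
    (h : ∑ i ∈ s, #(t i) ≤ #(s.biUnion t)) : (s : Set ι).PairwiseDisjoint t := by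
  classical
  intro a ha b hb hab
  refine disjoint_left.2 fun y hya hyb => ?_
  set X := (s.erase b).biUnion t
  have hunion : s.biUnion t = X ∪ t b := by
    rw [union_comm, ← biUnion_insert, insert_erase (mem_coe.1 hb)]
  have hinter : 0 < #(X ∩ t b) :=
    card_pos.2 ⟨y, mem_inter.2 ⟨mem_biUnion.2 ⟨a, mem_erase.2 ⟨hab, ha⟩, hya⟩, hyb⟩⟩
  have hX : #X ≤ ∑ i ∈ s.erase b, #(t i) := card_biUnion_le
  have := card_union_add_card_inter X (t b)
  rw [← sum_erase_add _ _ (mem_coe.1 hb), hunion] at h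
  omega

theorem Finset.biUnion_eq_and_pairwiseDisjoint_of_subset_of_sum_card_le {u : Finset α}
    (hu : u ⊆ s.biUnion t) (h : ∑ i ∈ s, #(t i) ≤ #u) :
    s.biUnion t = u ∧ (s : Set ι).PairwiseDisjoint t := by
  have heq := (eq_of_subset_of_card_le hu (card_biUnion_le.trans h)).symm
  exact ⟨heq, pairwiseDisjoint_of_sum_card_le_card_biUnion (heq ▸ h)⟩

end Cardinality

namespace Ideal

variable {R : Type*} [CommRing R]

theorem prod_mem_of_subset {ι : Type*} {P : Ideal R} {x : ι → R} {s t : Finset ι} (hst : s ⊆ t)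
    (hs : ∏ i ∈ s, x i ∈ P) : ∏ i ∈ t, x i ∈ P :=
  P.mem_of_dvd (prod_dvd_prod_of_subset s t x hst) hs

theorem iInf_radical_le_radical_prod {ι : Type*} [Fintype ι] (I : ι → Ideal R) :
    ⨅ i, (I i).radical ≤ (∏ i, I i).radical := by
  intro x hx
  choose c hc using fun i => mem_radical_iff.1 (mem_iInf.1 hx i)
  exact ⟨∑ i, c i, prod_pow_eq_pow_sum univ c x ▸ prod_mem_prod fun i _ => hc i⟩

end Ideal

section Absorbing

variable {R ι : Type*} [CommRing R] [DecidableEq ι] {φ : Ideal R → Ideal R} {n : ℕ}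

theorem IsPhiNAbsorbing.exists_subset_card_eq_prod_mem {P : Ideal R}
    (hP : IsPhiNAbsorbing φ n P) (x : ι → R) {s : Finset ι} (hs : n ≤ #s)
    (hx : ∏ i ∈ s, x i ∈ P) (hφx : ∏ i ∈ s, x i ∉ φ P) :
    ∃ T ⊆ s, #T = n ∧ ∏ i ∈ T, x i ∈ P := by
  induction s using Finset.strongInduction with
  | H s ih =>
    rcases hs.eq_or_lt with hs | hs
    · exact ⟨s, subset_rfl, hs.symm, hx⟩
    obtain ⟨T, hTs, hT⟩ := exists_subset_card_eq hs.le
    obtain ⟨e, rfl⟩ := exists_fin_embedding_map_univ_eq hT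
    obtain ⟨i, hi⟩ := hP.2 (packTuple x s e) (by rwa [prod_packTuple hTs])
      (by rwa [prod_packTuple hTs])
    induction i using Fin.lastCases with
    | last =>
      rw [Fin.prod_erase_last, prod_castSucc_packTuple] at hi
      exact ⟨_, hTs, hT, hi⟩
    | cast i =>
      rw [prod_erase_castSucc_packTuple hTs] at hi
      have hes : e i ∈ s := hTs (mem_map_of_mem _ (mem_univ i))
      have hφ' : ∏ j ∈ s.erase (e i), x j ∉ φ P := fun h =>
        hφx (mul_prod_erase s x hes ▸ Ideal.mul_mem_left _ _ h)
      obtain ⟨T', hT's, hT', hT'P⟩ := ih _ (erase_ssubset hes)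
        (by rw [card_erase_of_mem hes]; omega) hi hφ'
      exact ⟨T', hT's.trans (erase_subset _ _), hT', hT'P⟩

theorem IsPhiNAbsorbingPrimary.prod_mem_or_exists_prod_erase_mem_radical {I : Ideal R}
    (hI : IsPhiNAbsorbingPrimary φ n I) (x : ι → R) {s T : Finset ι} (hTs : T ⊆ s) (hT : #T = n)
    (hx : ∏ i ∈ s, x i ∈ I) (hφx : ∏ i ∈ s, x i ∉ φ I) :
    ∏ i ∈ T, x i ∈ I ∨ ∃ t ∈ T, ∏ i ∈ s.erase t, x i ∈ I.radical := by
  obtain ⟨e, rfl⟩ := exists_fin_embedding_map_univ_eq hT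
  rcases hI.2 (packTuple x s e) (by rwa [prod_packTuple hTs]) (by rwa [prod_packTuple hTs])
    with h | ⟨i, hi⟩
  · rw [prod_castSucc_packTuple] at h
    exact Or.inl h
  · rw [prod_erase_castSucc_packTuple hTs] at hi
    exact Or.inr ⟨e i, mem_map_of_mem _ (mem_univ i), hi⟩

end Absorbing

theorem Fin.exists_forall_castSucc_notMem_or_biUnion_eq_erase_last {κ : Type*} [Fintype κ] {N : ℕ}
    (T : κ → Finset (Fin (N + 1))) (hT : ∑ j, #(T j) ≤ N) :
    (∃ i : Fin N, ∀ j, i.castSucc ∉ T j) ∨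
      univ.biUnion T = univ.erase (Fin.last N) ∧
        ((univ : Finset κ) : Set κ).PairwiseDisjoint T := by
  by_cases hgap : ∃ i : Fin N, ∀ j, i.castSucc ∉ T j
  · exact Or.inl hgap
  push Not at hgap
  refine Or.inr (biUnion_eq_and_pairwiseDisjoint_of_subset_of_sum_card_le (fun i hi => ?_)
    (by simpa using hT))
  obtain ⟨i, rfl⟩ := Fin.exists_castSucc_eq.2 (ne_of_mem_erase hi)
  obtain ⟨j, hj⟩ := hgap i
  exact mem_biUnion.2 ⟨j, mem_univ j, hj⟩

theorem isPhiNAbsorbingPrimary_of_prod_le_of_le {R κ : Type*} [CommRing R] [Fintype κ]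
    [Nonempty κ] {φ : Ideal R → Ideal R} (hrev : ∀ J K : Ideal R, J ≤ K → φ K ≤ φ J)
    {m : κ → ℕ} {I : κ → Ideal R} (hprimary : ∀ j, IsPhiNAbsorbingPrimary φ (m j) (I j))
    (habs : ∀ j, IsPhiNAbsorbing φ (m j) (I j).radical) {J : Ideal R} (hprod : ∏ j, I j ≤ J)
    (hle : ∀ j, J ≤ I j) : IsPhiNAbsorbingPrimary φ (∑ j, m j) J := by
  set N := ∑ j, m j
  obtain ⟨j₀⟩ := ‹Nonempty κ›
  refine ⟨fun hJ => (hprimary j₀).1 (top_le_iff.1 (hJ ▸ hle j₀)), fun a ha hφa => ?_⟩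
  have hmem : ∀ j, ∏ i, a i ∈ I j := fun j => hle j ha
  have hφ : ∀ K, J ≤ K → ∏ i, a i ∉ φ K := fun K hK h => hφa (hrev _ _ hK h)
  have hrad : ∀ y, (∀ j, y ∈ (I j).radical) → y ∈ J.radical := fun y hy =>
    Ideal.radical_mono hprod (Ideal.iInf_radical_le_radical_prod I (Submodule.mem_iInf _ |>.2 hy))
  have hmN : ∀ j, m j ≤ #(univ : Finset (Fin (N + 1))) := fun j => by
    simpa using (single_le_sum (fun _ _ => Nat.zero_le _) (mem_univ j)).trans N.le_succ
  choose T _ hTcard hT using fun j => (habs j).exists_subset_card_eq_prod_mem a (hmN j)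
    (Ideal.le_radical (hmem j)) (hφ _ ((hle j).trans Ideal.le_radical))
  have hrad_of_notMem : ∀ t j, t ∉ T j → ∏ i ∈ univ.erase t, a i ∈ (I j).radical :=
    fun t j ht => Ideal.prod_mem_of_subset (subset_erase.2 ⟨subset_univ _, ht⟩) (hT j)
  rcases Fin.exists_forall_castSucc_notMem_or_biUnion_eq_erase_last T (by simp [hTcard, N])
    with ⟨i, hi⟩ | ⟨hU, hdisj⟩
  · exact Or.inr ⟨i, hrad _ fun j => hrad_of_notMem _ j (hi j)⟩
  by_cases hall : ∀ j, ∏ i ∈ T j, a i ∈ I j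
  · left
    rw [← Fin.prod_erase_last, ← hU, prod_biUnion hdisj]
    exact hprod (Ideal.prod_mem_prod fun j _ => hall j)
  push Not at hall
  obtain ⟨j₀, hj₀⟩ := hall
  obtain ⟨t, ht, htrad⟩ := ((hprimary j₀).prod_mem_or_exists_prod_erase_mem_radical a
    (subset_univ _) (hTcard j₀) (hmem j₀) (hφ _ (hle j₀))).resolve_left hj₀
  have htU : t ∈ univ.erase (Fin.last N) := hU ▸ mem_biUnion.2 ⟨j₀, mem_univ _, ht⟩
  obtain ⟨i, rfl⟩ := Fin.exists_castSucc_eq.2 (ne_of_mem_erase htU)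
  refine Or.inr ⟨i, hrad _ fun j => ?_⟩
  rcases eq_or_ne j j₀ with rfl | hj
  · exact htrad
  · exact hrad_of_notMem _ j fun htj => hj (hdisj.elim_finset (mem_univ _) (mem_univ _) _ htj ht)

theorem stmt_2_general {R : Type*} [CommRing R] (k : ℕ) (hk : 0 < k)
    (φ : Ideal R → Ideal R)
    (hrev : ∀ J K : Ideal R, J ≤ K → φ K ≤ φ J)
    (m : Fin k → ℕ) (I : Fin k → Ideal R)
    (hprimary : ∀ i, IsPhiNAbsorbingPrimary φ (m i) (I i))
    (habs : ∀ i, IsPhiNAbsorbing φ (m i) (I i).radical) :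
    IsPhiNAbsorbingPrimary φ (∑ i, m i) (⨅ i, I i) ∧
      IsPhiNAbsorbingPrimary φ (∑ i, m i) (∏ i, I i) := by
  have : Nonempty (Fin k) := ⟨⟨0, hk⟩⟩
  have hprod_le : ∀ j, ∏ i, I i ≤ I j := fun j => Ideal.prod_le_inf.trans (inf_le (mem_univ j))
  exact ⟨isPhiNAbsorbingPrimary_of_prod_le_of_le hrev hprimary habs (le_iInf hprod_le) (iInf_le I),
    isPhiNAbsorbingPrimary_of_prod_le_of_le hrev hprimary habs le_rfl hprod_le⟩

/-- Theorem 2.8: if `φ` reverses inclusions and each `Iᵢ` is `φ`-`nᵢ`-absorbing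
primary with `√Iᵢ` a `φ`-`nᵢ`-absorbing ideal, then the intersection and the
product of the `Iᵢ`'s are `φ`-`(n₁ + ⋯ + n_k)`-absorbing primary. -/
theorem stmt_2 {R : Type*} [CommRing R] [Nontrivial R] (k : ℕ) (hk : 0 < k)
    (φ : Ideal R → Ideal R) (hφ : ∀ J : Ideal R, φ J ≤ J)
    (hrev : ∀ J K : Ideal R, J ≤ K → φ K ≤ φ J)
    (m : Fin k → ℕ) (hm : ∀ i, 0 < m i) (I : Fin k → Ideal R)
    (hprimary : ∀ i, IsPhiNAbsorbingPrimary φ (m i) (I i))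
    (habs : ∀ i, IsPhiNAbsorbing φ (m i) (I i).radical) :
    IsPhiNAbsorbingPrimary φ (∑ i, m i) (⨅ i, I i) ∧
      IsPhiNAbsorbingPrimary φ (∑ i, m i) (∏ i, I i) :=
  stmt_2_general k hk φ hrev m I hprimary habs
end

section
/- Let n ≥ 2, let φ be a function from the set of ideals of R to itself, and let I be a proper ideal of R such that √(φ(√I)) ⊆ φ(I). If √I is a φ-(n−1)-absorbing ideal of R, then I is a φ-n-absorbing primary ideal of R. -/
namespace Fin

variable {M : Type*} [CommMonoid M] {m : ℕ}

theorem prod_univ_erase_castSucc (f : Fin (m + 1) → M) (i : Fin m) :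
    ∏ j ∈ Finset.univ.erase i.castSucc, f j
      = (∏ j ∈ Finset.univ.erase i, f j.castSucc) * f (last m) := by
  rw [univ_castSuccEmb,
    Finset.erase_cons_of_ne (by simp [Fin.ext_iff]; omega) (castSucc_lt_last i).ne',
    Finset.prod_cons, show i.castSucc = castSuccEmb i from rfl, ← Finset.map_erase,
    Finset.prod_map, mul_comm]
  rfl

/-- `mulLastTwo a = (a₀, …, a_{m-1}, a_m * a_{m+1})`. -/
def mulLastTwo (a : Fin (m + 2) → M) : Fin (m + 1) → M :=
  fun j => a j.castSucc * (Pi.mulSingle (last m) (a (last (m + 1))) : Fin (m + 1) → M) j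

theorem prod_mulLastTwo (a : Fin (m + 2) → M) : ∏ j, mulLastTwo a j = ∏ j, a j := by
  simp only [mulLastTwo, Finset.prod_mul_distrib, Finset.prod_pi_mulSingle', Finset.mem_univ,
    if_true, prod_univ_castSucc a]

theorem prod_erase_mulLastTwo_dvd (a : Fin (m + 2) → M) (i : Fin (m + 1)) :
    ∏ j ∈ Finset.univ.erase i, mulLastTwo a j ∣ ∏ j ∈ Finset.univ.erase i.castSucc, a j := by
  rw [prod_univ_erase_castSucc]
  simp only [mulLastTwo, Finset.prod_mul_distrib, Finset.prod_pi_mulSingle']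
  split_ifs
  · rfl
  · exact mul_dvd_mul_left _ (one_dvd _)

end Fin

theorem isPhiNAbsorbingPrimary_succ_of_radical {R : Type*} [CommRing R]
    {φ : Ideal R → Ideal R} {I : Ideal R} {m : ℕ} (hcond : (φ I.radical).radical ≤ φ I)
    (habs : IsPhiNAbsorbing φ m I.radical) : IsPhiNAbsorbingPrimary φ (m + 1) I := by
  refine ⟨fun hI => habs.1 (Ideal.radical_eq_top.mpr hI), fun a ha hna => Or.inr ?_⟩
  have hprod := Fin.prod_mulLastTwo a
  obtain ⟨i, hi⟩ := habs.2 (Fin.mulLastTwo a) (hprod ▸ I.le_radical ha)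
    fun h => hna (hcond (Ideal.le_radical (hprod ▸ h)))
  exact ⟨i, Ideal.mem_of_dvd _ (Fin.prod_erase_mulLastTwo_dvd a i) hi⟩

theorem stmt_4_general {R : Type*} [CommRing R] (n : ℕ) (hn : 2 ≤ n)
    (φ : Ideal R → Ideal R) (I : Ideal R)
    (hcond : (φ I.radical).radical ≤ φ I)
    (habs : IsPhiNAbsorbing φ (n - 1) I.radical) :
    IsPhiNAbsorbingPrimary φ n I := by
  obtain ⟨m, rfl⟩ : ∃ m, n = m + 1 := ⟨n - 1, by omega⟩
  exact isPhiNAbsorbingPrimary_succ_of_radical hcond habs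

/-- Theorem 2.12: if `√(φ(√I)) ⊆ φ(I)` and `√I` is `φ`-`(n-1)`-absorbing,
then `I` is `φ`-`n`-absorbing primary. -/
theorem stmt_4 {R : Type*} [CommRing R] [Nontrivial R] (n : ℕ) (hn : 2 ≤ n)
    (φ : Ideal R → Ideal R) (hφ : ∀ J : Ideal R, φ J ≤ J) (I : Ideal R) (hI : I ≠ ⊤)
    (hcond : (φ I.radical).radical ≤ φ I)
    (habs : IsPhiNAbsorbing φ (n - 1) I.radical) :
    IsPhiNAbsorbingPrimary φ n I :=
  stmt_4_general n hn φ I hcond habs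
end

section
/- Let I be a proper ideal of R. If √I = M₁ ∩ M₂ ∩ ⋯ ∩ M_n where M₁, …, M_n are maximal ideals of R, then I is an n-absorbing primary ideal of R. -/
/-!
Suppose `a₁ ⋯ aₙ₊₁ ∈ I` while no product `a₁ ⋯ âᵢ ⋯ aₙ₊₁` (`i ≤ n`) lies in `√I = M₁ ∩ ⋯ ∩ Mₙ`.
For each `i ≤ n` pick `M_{f i}` missing that product; as `M_{f i}` is prime it contains `aᵢ`,
and `aᵢ` is a factor of every other omitted product, so `f` is injective, hence bijective.
Then `aₙ₊₁`, a factor of all these products, lies in no `Mⱼ`, so it is a unit modulo `I`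
and `a₁ ⋯ aₙ ∈ I`.
-/

/-- A proper ideal `I` is `n`-absorbing primary. -/
def IsNAbsorbingPrimary {R : Type*} [CommRing R] (n : ℕ) (I : Ideal R) : Prop :=
  I ≠ ⊤ ∧ ∀ a : Fin (n + 1) → R,
    (∏ i, a i) ∈ I →
      ((∏ i : Fin n, a i.castSucc) ∈ I ∨
        ∃ i : Fin n, (∏ j ∈ Finset.univ.erase i.castSucc, a j) ∈ I.radical)

open Finset Function

namespace Ideal

variable {R : Type*} [CommRing R]

theorem mem_of_mul_mem_of_sup_span_singleton_eq_top {I : Ideal R} {x y : R} (hxy : x * y ∈ I)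
    (hy : I ⊔ span {y} = ⊤) : x ∈ I := by
  have hone : (1 : R) ∈ span {y} ⊔ I := by rw [sup_comm, hy]; exact Submodule.mem_top
  obtain ⟨r, i, hi, hri⟩ := mem_span_singleton_sup.1 hone
  have hx : x = r * (x * y) + x * i := by linear_combination (-x) * hri
  rw [hx]
  exact I.add_mem (I.mul_mem_left r hxy) (I.mul_mem_left x hi)

theorem IsPrime.exists_le_of_iInf_le {ι : Type*} [Finite ι] {f : ι → Ideal R} {P : Ideal R}
    (hP : P.IsPrime) (h : ⨅ i, f i ≤ P) : ∃ i, f i ≤ P := by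
  have := Fintype.ofFinite ι
  obtain ⟨i, -, hi⟩ := (hP.inf_le' (s := univ) (f := f)).1 (by rwa [inf_univ_eq_iInf])
  exact ⟨i, hi⟩

theorem sup_span_singleton_eq_top_of_radical_eq_iInf {ι : Type*} [Finite ι] {I : Ideal R}
    {M : ι → Ideal R} (hM : ∀ i, (M i).IsMaximal) (hrad : I.radical = ⨅ i, M i) {a : R}
    (ha : ∀ i, a ∉ M i) : I ⊔ span {a} = ⊤ := by
  by_contra hne
  obtain ⟨P, hP, hle⟩ := exists_le_maximal _ hne
  have hIP : ⨅ i, M i ≤ P := hrad ▸ hP.isPrime.radical_le_iff.2 (le_sup_left.trans hle)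
  obtain ⟨i, hi⟩ := hP.isPrime.exists_le_of_iInf_le hIP
  exact ha i ((hM i).eq_of_le hP.ne_top hi ▸ hle (mem_sup_right (mem_span_singleton_self a)))

theorem notMem_of_prod_erase_notMem {ι κ : Type*} [Finite ι] [Fintype κ] [DecidableEq κ]
    {P : ι → Ideal R} [∀ j, (P j).IsPrime] {a : κ → R} {e : ι → κ} (he : Injective e)
    (hprod : ∀ j, ∏ k, a k ∈ P j) (herase : ∀ i, ∃ j, ∏ k ∈ univ.erase (e i), a k ∉ P j)
    {k : κ} (hk : ∀ i, e i ≠ k) (j : ι) : a k ∉ P j := by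
  choose f hf using herase
  have hfactor : ∀ {i l}, l ≠ e i → a l ∉ P (f i) := fun hl hal =>
    hf _ (mem_of_dvd _ (dvd_prod_of_mem a (mem_erase.2 ⟨hl, mem_univ _⟩)) hal)
  have hdiag : ∀ i, a (e i) ∈ P (f i) := fun i => by
    have := hprod (f i)
    rw [← mul_prod_erase univ a (mem_univ (e i))] at this
    exact (IsPrime.mem_or_mem inferInstance this).resolve_right (hf i)
  have hinj : Injective f := fun i i' h =>
    he (by_contra fun hne => hfactor hne (h ▸ hdiag i))
  obtain ⟨i, rfl⟩ := Finite.surjective_of_injective hinj j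
  exact hfactor (hk i).symm

end Ideal

theorem stmt_5_general {R : Type*} [CommRing R] (n : ℕ)
    (I : Ideal R) (hI : I ≠ ⊤) (M : Fin n → Ideal R) (hM : ∀ i, (M i).IsMaximal)
    (hrad : I.radical = ⨅ i, M i) :
    IsNAbsorbingPrimary n I := by
  refine ⟨hI, fun a ha => or_iff_not_imp_right.2 fun hcon => ?_⟩
  push Not at hcon
  have : ∀ i, (M i).IsPrime := fun i => (hM i).isPrime
  have hprod : ∀ j, ∏ k, a k ∈ M j := fun j => (hrad ▸ iInf_le M j) (I.le_radical ha)
  have herase : ∀ i : Fin n, ∃ j, ∏ k ∈ univ.erase i.castSucc, a k ∉ M j := fun i => by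
    simpa [hrad, Ideal.mem_iInf] using hcon i
  have hlast : ∀ j, a (Fin.last n) ∉ M j :=
    Ideal.notMem_of_prod_erase_notMem (Fin.castSucc_injective n) hprod herase
      (fun i => (Fin.castSucc_lt_last i).ne)
  rw [Fin.prod_univ_castSucc] at ha
  exact Ideal.mem_of_mul_mem_of_sup_span_singleton_eq_top ha
    (Ideal.sup_span_singleton_eq_top_of_radical_eq_iInf hM hrad hlast)

/-- Theorem 2.15: if `√I = M₁ ∩ ⋯ ∩ Mₙ` with the `Mᵢ` maximal ideals, then
`I` is an `n`-absorbing primary ideal. -/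
theorem stmt_5 {R : Type*} [CommRing R] [Nontrivial R] (n : ℕ) (hn : 0 < n)
    (I : Ideal R) (hI : I ≠ ⊤) (M : Fin n → Ideal R) (hM : ∀ i, (M i).IsMaximal)
    (hrad : I.radical = ⨅ i, M i) :
    IsNAbsorbingPrimary n I :=
  stmt_5_general n I hI M hM hrad
end

section
/- Let R be a Noetherian integral domain with 1 ≠ 0 that is not a field, and let n be a positive integer. Then R is a Dedekind domain if and only if the following holds: a nonzero proper ideal I of R is an n-absorbing primary ideal of R if and only if I = M₁^{t₁}M₂^{t₂}⋯M_i^{t_i} for some 1 ≤ i ≤ n, some distinct maximal ideals M₁, M₂, …, M_i of R and some positive integers t₁, t₂, …, t_i. -/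
open Finset Function UniqueFactorizationMonoid IsLocalRing

namespace Ideal

variable {R : Type*} [CommRing R]

theorem radical_iInf_of_finite {ι : Type*} [Finite ι] (Q : ι → Ideal R) :
    (⨅ j, Q j).radical = ⨅ j, (Q j).radical := by
  have := Fintype.ofFinite ι
  rw [← inf_univ_eq_iInf, ← inf_univ_eq_iInf, ← radicalInfTopHom_apply, map_finset_inf]
  rfl

theorem prod_notMem_radical_of_forall_sub_one_mem {ι : Type*} {J : Ideal R} (hJ : J ≠ ⊤)
    {s : Finset ι} {a : ι → R} (ha : ∀ k ∈ s, a k - 1 ∈ J) : ∏ k ∈ s, a k ∉ J.radical := by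
  have : Nontrivial (R ⧸ J) := Quotient.nontrivial_iff.mpr hJ
  have hone : Quotient.mk J (∏ k ∈ s, a k) = 1 := by
    rw [map_prod]
    exact prod_eq_one fun k hk => by
      rw [← map_one (Quotient.mk J), Quotient.eq]
      exact ha k hk
  rintro ⟨m, hm⟩
  have := Quotient.eq_zero_iff_mem.mpr hm
  rw [map_pow, hone, one_pow] at this
  exact one_ne_zero this

theorem isPrimary_pow_of_isMaximal {M : Ideal R} (hM : M.IsMaximal) {t : ℕ} (ht : t ≠ 0) :
    (M ^ t).IsPrimary :=
  isPrimary_of_isMaximal_radical (by rwa [radical_pow (I := M) ht, hM.isPrime.radical])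

theorem prod_pow_eq_iInf_of_isMaximal {ι : Type*} [Fintype ι] {M : ι → Ideal R}
    (hM : ∀ j, (M j).IsMaximal) (hinj : Injective M) (t : ι → ℕ) :
    ∏ j, M j ^ t j = ⨅ j, M j ^ t j := by
  rw [prod_eq_iInf_of_pairwise_isCoprime]
  · simp
  · intro j _ k _ hjk
    have := hM j
    have := hM k
    exact (isCoprime_of_isMaximal (hinj.ne hjk)).pow

theorem IsPrime.isMaximal_of_prod_pow_le {ι : Type*} [Fintype ι] {M : ι → Ideal R}
    (hM : ∀ j, (M j).IsMaximal) {t : ι → ℕ} {P : Ideal R} (hP : P.IsPrime)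
    (hle : ∏ j, M j ^ t j ≤ P) : P.IsMaximal := by
  obtain ⟨j, -, hj⟩ := hP.prod_le.mp hle
  rw [← (hM j).eq_of_le hP.ne_top (hP.le_of_pow_le hj)]
  exact hM j

theorem IsPrimary.eq_radical_pow_of_eq_prod_pow {ι : Type*} [Fintype ι] {Q : Ideal R}
    (hQ : Q.IsPrimary) {M : ι → Ideal R} (hM : ∀ j, (M j).IsMaximal) {t : ι → ℕ}
    (ht : ∀ j, t j ≠ 0) (hQM : Q = ∏ j, M j ^ t j) : Q = Q.radical ^ ∑ j, t j := by
  have hmax : Q.radical.IsMaximal :=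
    (isPrime_radical hQ).isMaximal_of_prod_pow_le hM (hQM.symm.trans_le le_radical)
  have hMQ : ∀ j, M j = Q.radical := fun j =>
    (hmax.eq_of_le (hM j).ne_top <| (hM j).isPrime.radical_le_iff.mpr <|
      hQM ▸ (prod_le_inf.trans (inf_le (mem_univ j))).trans (pow_le_self (ht j))).symm
  conv_lhs => rw [hQM]
  simp only [hMQ, prod_pow_eq_pow_sum]

end Ideal

section NAbsorbingPrimary

variable {R : Type*} [CommRing R] {n : ℕ}

theorem isNAbsorbingPrimary_iInf_of_isPrimary {ι : Type*} [Fintype ι] {Q : ι → Ideal R}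
    (hQ : ∀ j, (Q j).IsPrimary) (hcard : Fintype.card ι ≤ n) (htop : ⨅ j, Q j ≠ ⊤) :
    IsNAbsorbingPrimary n (⨅ j, Q j) := by
  classical
  refine ⟨htop, fun a ha => ?_⟩
  rw [Ideal.radical_iInf_of_finite]
  by_contra! h
  obtain ⟨hfirst, homit⟩ := h
  simp only [Ideal.mem_iInf, not_forall] at hfirst homit
  obtain ⟨j₀, hj₀⟩ := hfirst
  have hlast : a (Fin.last n) ∈ (Q j₀).radical := by
    rw [Fin.prod_univ_castSucc] at ha
    exact ((Ideal.isPrimary_iff.mp (hQ j₀)).2 (Ideal.mem_iInf.mp ha j₀)).resolve_left hj₀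
  -- `g i` is a component whose radical contains `a i` but no other factor, so `g` is
  -- injective and misses `j₀`: too many values for at most `n` components.
  choose g hg using homit
  have hfactor : ∀ i k, k ≠ i.castSucc → a k ∉ (Q (g i)).radical := fun i k hk hak =>
    hg i (Ideal.mem_of_dvd _ (dvd_prod_of_mem a (mem_erase.mpr ⟨hk, mem_univ k⟩)) hak)
  have hmem : ∀ i, a i.castSucc ∈ (Q (g i)).radical := fun i => by
    have := Ideal.le_radical (Ideal.mem_iInf.mp ha (g i))
    rw [← mul_prod_erase univ a (mem_univ i.castSucc)] at this
    exact ((Ideal.isPrime_radical (hQ (g i))).mem_or_mem this).resolve_right (hg i)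
  have hginj : Injective g := fun i i' he => by
    by_contra hne
    exact hfactor i i'.castSucc (fun h => hne (Fin.castSucc_injective n h).symm) (he ▸ hmem i')
  have hgj₀ : ∀ i, g i ≠ j₀ := fun i he =>
    hfactor i (Fin.last n) (Fin.castSucc_ne_last i).symm (he ▸ hlast)
  have hsub : univ.map ⟨g, hginj⟩ ⊆ univ.erase j₀ := fun j hj => by
    obtain ⟨i, -, rfl⟩ := mem_map.mp hj
    exact mem_erase.mpr ⟨hgj₀ i, mem_univ _⟩
  have := card_le_card hsub
  rw [card_map, card_univ, card_erase_of_mem (mem_univ _), card_univ, Fintype.card_fin] at this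
  have : 0 < Fintype.card ι := Fintype.card_pos_iff.mpr ⟨j₀⟩
  omega

theorem isNAbsorbingPrimary_of_isPrimary (hn : 0 < n) {Q : Ideal R} (hQ : Q.IsPrimary) :
    IsNAbsorbingPrimary n Q := by
  simpa using isNAbsorbingPrimary_iInf_of_isPrimary (ι := Unit) (fun _ => hQ) hn
    (by simpa using hQ.ne_top)

theorem card_le_of_isNAbsorbingPrimary_iInf {ι : Type*} [Fintype ι] {Q : ι → Ideal R}
    (hcop : Pairwise (IsCoprime on Q)) (htop : ∀ j, Q j ≠ ⊤)
    (hI : IsNAbsorbingPrimary n (⨅ j, Q j)) : Fintype.card ι ≤ n := by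
  classical
  by_contra! hlt
  obtain ⟨e⟩ := Embedding.nonempty_of_card_le (α := Fin (n + 1)) (β := ι)
    (by rwa [Fintype.card_fin])
  choose a ha using fun k : Fin (n + 1) => Ideal.exists_forall_sub_mem_ideal hcop
    fun j => if ∃ k', k' ≠ k ∧ e k' = j then (1 : R) else 0
  have hone : ∀ k k', k' ≠ k → a k - 1 ∈ Q (e k') := fun k k' hk => by
    simpa [hk] using ha k (e k')
  have hzero : ∀ k j, (∀ k', e k' = j → k' = k) → a k ∈ Q j := fun k j hj => by
    simpa [show ¬∃ k', k' ≠ k ∧ e k' = j from fun ⟨k', hk', he⟩ => hk' (hj k' he)] using ha k j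
  have hprod : ∏ k, a k ∈ ⨅ j, Q j := by
    refine Ideal.mem_iInf.mpr fun j => ?_
    obtain ⟨k, hk⟩ : ∃ k, ∀ k', e k' = j → k' = k := by
      by_cases hj : ∃ k, e k = j
      · obtain ⟨k, rfl⟩ := hj
        exact ⟨k, fun k' => (e.injective ·)⟩
      · exact ⟨0, fun k' hk' => (hj ⟨k', hk'⟩).elim⟩
    exact Ideal.mem_of_dvd _ (dvd_prod_of_mem a (mem_univ k)) (hzero k j hk)
  rcases hI.2 a hprod with hfirst | ⟨i, homit⟩
  · exact Ideal.prod_notMem_radical_of_forall_sub_one_mem (htop (e (Fin.last n)))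
      (fun k _ => hone _ _ (Fin.castSucc_ne_last k).symm)
      (Ideal.le_radical (Ideal.mem_iInf.mp hfirst _))
  · exact Ideal.prod_notMem_radical_of_forall_sub_one_mem (htop (e i.castSucc))
      (fun k hk => hone _ _ (ne_of_mem_erase hk).symm)
      (Ideal.radical_mono (iInf_le _ _) homit)

theorem isNAbsorbingPrimary_prod_pow_iff {ι : Type*} [Fintype ι] {M : ι → Ideal R}
    (hM : ∀ j, (M j).IsMaximal) (hinj : Injective M) {t : ι → ℕ} (ht : ∀ j, t j ≠ 0)
    (htop : ∏ j, M j ^ t j ≠ ⊤) :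
    IsNAbsorbingPrimary n (∏ j, M j ^ t j) ↔ Fintype.card ι ≤ n := by
  have hprimary j : (M j ^ t j).IsPrimary := Ideal.isPrimary_pow_of_isMaximal (hM j) (ht j)
  rw [Ideal.prod_pow_eq_iInf_of_isMaximal hM hinj] at htop ⊢
  refine ⟨card_le_of_isNAbsorbingPrimary_iInf (fun j k hjk => ?_) (hprimary · |>.ne_top),
    fun hcard => isNAbsorbingPrimary_iInf_of_isPrimary hprimary hcard htop⟩
  have := hM j
  have := hM k
  exact (Ideal.isCoprime_of_isMaximal (hinj.ne hjk)).pow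

end NAbsorbingPrimary

theorem Multiset.exists_prod_eq_prod_fin_pow {α : Type*} [CommMonoid α] [DecidableEq α]
    (m : Multiset α) :
    ∃ (i : ℕ) (x : Fin i → α) (t : Fin i → ℕ), Injective x ∧ (∀ j, x j ∈ m) ∧
      (∀ j, 0 < t j) ∧ m.prod = ∏ j, x j ^ t j := by
  let e := m.toFinset.equivFin.symm
  refine ⟨_, fun j => e j, fun j => m.count (e j : α), fun j j' h => e.injective (Subtype.ext h),
    fun j => mem_toFinset.mp (e j).2, fun j => count_pos.mpr (mem_toFinset.mp (e j).2), ?_⟩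
  rw [Finset.prod_multiset_count, ← Finset.prod_coe_sort]
  exact (e.prod_comp fun x : m.toFinset => (x : α) ^ m.count (x : α)).symm

theorem Ideal.exists_eq_prod_pow_of_ne_bot {R : Type*} [CommRing R] [IsDedekindDomain R]
    {I : Ideal R} (hI : I ≠ ⊥) :
    ∃ (i : ℕ) (M : Fin i → Ideal R) (t : Fin i → ℕ), (∀ j, (M j).IsMaximal) ∧
      Injective M ∧ (∀ j, 0 < t j) ∧ I = ∏ j, M j ^ t j := by
  classical
  obtain ⟨i, M, t, hinj, hmem, ht, hprod⟩ := (normalizedFactors I).exists_prod_eq_prod_fin_pow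
  refine ⟨i, M, t, fun j => ?_, hinj, ht, by rw [← hprod, prod_normalizedFactors_eq_self hI]⟩
  have hp := prime_of_normalized_factor _ (hmem j)
  exact (isPrime_of_prime hp).isMaximal hp.ne_zero

theorem IsLocalRing.radical_eq_maximalIdeal {L : Type*} [CommRing L] [IsLocalRing L]
    [Ring.DimensionLEOne L] {J : Ideal L} (h0 : J ≠ ⊥) (htop : J ≠ ⊤) :
    J.radical = maximalIdeal L := by
  rw [Ideal.radical_eq_sInf]
  refine le_antisymm (sInf_le ⟨le_maximalIdeal htop, (maximalIdeal.isMaximal L).isPrime⟩)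
    (le_sInf ?_)
  rintro q ⟨hJq, hq⟩
  exact (eq_maximalIdeal (hq.isMaximal (ne_bot_of_le_ne_bot h0 hJq))).ge

section DedekindCriterion

variable {R : Type*} [CommRing R] [IsDomain R] [Ring.DimensionLEOne R]

theorem Localization.AtPrime.exists_eq_maximalIdeal_pow
    (h : ∀ Q : Ideal R, Q ≠ ⊥ → Q.IsPrimary → ∃ t : ℕ, Q = Q.radical ^ t)
    {P : Ideal R} [P.IsPrime] {J : Ideal (Localization.AtPrime P)} (hJ : J ≠ ⊥) :
    ∃ t : ℕ, J = maximalIdeal (Localization.AtPrime P) ^ t := by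
  have : Ring.DimensionLEOne (Localization.AtPrime P) :=
    .localization _ P.primeCompl_le_nonZeroDivisors
  by_cases htop : J = ⊤
  · exact ⟨0, by rw [htop, pow_zero, Ideal.one_eq_top]⟩
  have hrad := IsLocalRing.radical_eq_maximalIdeal hJ htop
  have hprimary : (J.under R).IsPrimary :=
    (Ideal.isPrimary_of_isMaximal_radical (hrad ▸ maximalIdeal.isMaximal _)).comap _
  have hJ0 : J.under R ≠ ⊥ := fun h0 => hJ <| by
    rw [← IsLocalization.map_under P.primeCompl _ J, h0, Ideal.map_bot]
  have hJrad : (J.under R).radical = P := by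
    rw [← Ideal.comap_radical, hrad]
    exact Localization.AtPrime.under_maximalIdeal
  obtain ⟨t, ht⟩ := h _ hJ0 hprimary
  refine ⟨t, ?_⟩
  rw [← IsLocalization.map_under P.primeCompl _ J, ht, hJrad, Ideal.map_pow,
    Localization.AtPrime.map_eq_maximalIdeal]

theorem isDedekindDomain_of_isPrimary_eq_radical_pow [IsNoetherianRing R]
    (h : ∀ Q : Ideal R, Q ≠ ⊥ → Q.IsPrimary → ∃ t : ℕ, Q = Q.radical ^ t) :
    IsDedekindDomain R :=
  have : IsDedekindDomainDvr R :=
    { is_dvr_at_nonzero_prime := fun _ hP0 _ =>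
        ((IsDiscreteValuationRing.TFAE _ (IsLocalization.AtPrime.not_isField R hP0 _)).out 0 6).mpr
          fun _ hJ => Localization.AtPrime.exists_eq_maximalIdeal_pow h hJ }
  inferInstance

end DedekindCriterion

theorem stmt_6_general {R : Type*} [CommRing R] [IsDomain R] [IsNoetherianRing R]
    (n : ℕ) (hn : 0 < n) :
    IsDedekindDomain R ↔
      ∀ I : Ideal R, I ≠ ⊥ → I ≠ ⊤ →
        (IsNAbsorbingPrimary n I ↔
          ∃ (i : ℕ), 1 ≤ i ∧ i ≤ n ∧
            ∃ (M : Fin i → Ideal R) (t : Fin i → ℕ),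
              (∀ j, (M j).IsMaximal) ∧ Function.Injective M ∧
                (∀ j, 0 < t j) ∧ I = ∏ j, M j ^ t j) := by
  constructor
  · intro _ I hI0 hItop
    constructor
    · intro hI
      obtain ⟨i, M, t, hM, hinj, ht, rfl⟩ := Ideal.exists_eq_prod_pow_of_ne_bot hI0
      refine ⟨i, Nat.pos_of_ne_zero ?_, ?_, M, t, hM, hinj, ht, rfl⟩
      · rintro rfl
        simp at hItop
      · simpa using (isNAbsorbingPrimary_prod_pow_iff hM hinj (ht · |>.ne') hItop).mp hI
    · rintro ⟨i, -, hin, M, t, hM, hinj, ht, rfl⟩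
      exact (isNAbsorbingPrimary_prod_pow_iff hM hinj (ht · |>.ne') hItop).mpr (by simpa)
  · intro H
    have hfactor (Q : Ideal R) (hQ0 : Q ≠ ⊥) (hQ : Q.IsPrimary) :
        ∃ (i : ℕ) (M : Fin i → Ideal R) (t : Fin i → ℕ),
          (∀ j, (M j).IsMaximal) ∧ (∀ j, 0 < t j) ∧ Q = ∏ j, M j ^ t j :=
      have ⟨i, _, _, M, t, hM, _, ht, hQM⟩ :=
        (H Q hQ0 hQ.ne_top).mp (isNAbsorbingPrimary_of_isPrimary hn hQ)
      ⟨i, M, t, hM, ht, hQM⟩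
    have : Ring.DimensionLEOne R := ⟨fun {P} hP0 hP => by
      obtain ⟨i, M, t, hM, -, hPM⟩ := hfactor P hP0 hP.isPrimary
      exact hP.isMaximal_of_prod_pow_le hM hPM.ge⟩
    refine isDedekindDomain_of_isPrimary_eq_radical_pow fun Q hQ0 hQ => ?_
    obtain ⟨i, M, t, hM, ht, hQM⟩ := hfactor Q hQ0 hQ
    exact ⟨_, hQ.eq_radical_pow_of_eq_prod_pow hM (ht · |>.ne') hQM⟩

/-- Theorem 2.17: a Noetherian domain `R` that is not a field is a Dedekind
domain iff a nonzero proper ideal `I` of `R` is `n`-absorbing primary exactly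
when `I = M₁^{t₁} ⋯ Mᵢ^{tᵢ}` for some `1 ≤ i ≤ n`, distinct maximal ideals
`M₁, …, Mᵢ` and positive integers `t₁, …, tᵢ`. -/
theorem stmt_6 {R : Type*} [CommRing R] [IsDomain R] [IsNoetherianRing R]
    (hnf : ¬ IsField R) (n : ℕ) (hn : 0 < n) :
    IsDedekindDomain R ↔
      ∀ I : Ideal R, I ≠ ⊥ → I ≠ ⊤ →
        (IsNAbsorbingPrimary n I ↔
          ∃ (i : ℕ), 1 ≤ i ∧ i ≤ n ∧
            ∃ (M : Fin i → Ideal R) (t : Fin i → ℕ),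
              (∀ j, (M j).IsMaximal) ∧ Function.Injective M ∧
                (∀ j, 0 < t j) ∧ I = ∏ j, M j ^ t j) :=
  stmt_6_general n hn
end

section
/- Let a ∈ R be a nonunit, let m ≥ 2 be an integer, and suppose the annihilator condition (0 :_R a) ⊆ ⟨a⟩ holds. Let φ be a function from the set of ideals of R to itself with φ(J) ⊆ Jᵐ for every ideal J (i.e. φ ≤ φ_m). Then the principal ideal ⟨a⟩ is φ-n-absorbing primary if and only if ⟨a⟩ is n-absorbing primary. -/
section

variable {R : Type*} [CommRing R]

theorem Ideal.prod_sub_prod_mem {ι : Type*} (I : Ideal R) {c c' : ι → R}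
    (h : ∀ i, c' i - c i ∈ I) (s : Finset ι) : ∏ i ∈ s, c' i - ∏ i ∈ s, c i ∈ I := by
  rw [← Ideal.Quotient.eq, map_prod, map_prod]
  exact Finset.prod_congr rfl fun i _ => Ideal.Quotient.eq.mpr (h i)

theorem absorbing_disjunction_of_sub_mem {n : ℕ} (I : Ideal R) {c c' : Fin (n + 1) → R}
    (h : ∀ i, c' i - c i ∈ I)
    (hc' : (∏ i : Fin n, c' i.castSucc) ∈ I ∨
      ∃ i : Fin n, (∏ j ∈ Finset.univ.erase i.castSucc, c' j) ∈ I.radical) :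
    (∏ i : Fin n, c i.castSucc) ∈ I ∨
      ∃ i : Fin n, (∏ j ∈ Finset.univ.erase i.castSucc, c j) ∈ I.radical := by
  rcases hc' with hfirst | ⟨i, hi⟩
  · left
    have hsub := I.prod_sub_prod_mem (fun i : Fin n => h i.castSucc) Finset.univ
    simpa only [sub_sub_cancel] using I.sub_mem hfirst hsub
  · right
    refine ⟨i, ?_⟩
    have hsub := I.le_radical (I.prod_sub_prod_mem h (Finset.univ.erase i.castSucc))
    simpa only [sub_sub_cancel] using I.radical.sub_mem hi hsub

theorem mem_span_singleton_of_mul_mem_span_sq {a x : R}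
    (hann : ∀ r : R, r * a = 0 → r ∈ Ideal.span {a}) (h : a * x ∈ Ideal.span {a ^ 2}) :
    x ∈ Ideal.span {a} := by
  obtain ⟨r, hr⟩ := Ideal.mem_span_singleton.mp h
  have hker : x - a * r ∈ Ideal.span {a} := hann _ (by linear_combination hr)
  simpa using Ideal.add_mem _ hker (Ideal.mul_mem_right r _ (Ideal.mem_span_singleton_self a))

end

theorem stmt_8_general {R : Type*} [CommRing R] (n : ℕ)
    (a : R) (m : ℕ) (hm : 2 ≤ m)
    (hann : ∀ r : R, r * a = 0 → r ∈ Ideal.span {a})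
    (φ : Ideal R → Ideal R) (hφ : ∀ J : Ideal R, φ J ≤ J ^ m) :
    IsPhiNAbsorbingPrimary φ n (Ideal.span {a}) ↔
      IsNAbsorbingPrimary n (Ideal.span {a}) := by
  set I := Ideal.span {a}
  refine ⟨fun ⟨hne, h⟩ => ⟨hne, fun c hc => ?_⟩, fun ⟨hne, h⟩ => ⟨hne, fun c hc _ => h c hc⟩⟩
  by_cases hφc : ∏ i, c i ∈ φ I
  swap
  · exact h c hc hφc
  set c' := Function.update c (Fin.last n) (c (Fin.last n) + a)
  have hprod : ∏ i, c' i = ∏ i, c i + a * ∏ i : Fin n, c i.castSucc := by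
    simp only [Fin.prod_univ_castSucc, c', Function.update_self,
      Function.update_of_ne (Fin.castSucc_ne_last _)]
    ring
  by_cases hφc' : ∏ i, c' i ∈ φ I
  · left
    have hφI : φ I ≤ Ideal.span {a ^ 2} := by
      rw [← Ideal.span_singleton_pow]
      exact (hφ I).trans (Ideal.pow_le_pow_right hm)
    refine mem_span_singleton_of_mul_mem_span_sq hann (hφI ?_)
    simpa [hprod] using Ideal.sub_mem _ hφc' hφc
  · have hc'c : ∀ i, c' i - c i ∈ I := fun i => by
      rcases eq_or_ne i (Fin.last n) with rfl | hi
      · simp only [c', Function.update_self, add_sub_cancel_left]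
        exact Ideal.mem_span_singleton_self a
      · simp [c', Function.update_of_ne hi]
    have hc' : ∏ i, c' i ∈ I := by
      rw [hprod]
      exact I.add_mem hc (I.mul_mem_right _ (Ideal.mem_span_singleton_self a))
    exact absorbing_disjunction_of_sub_mem I hc'c (h c' hc' hφc')

/-- Theorem 2.20: if `a` is a nonunit, `m ≥ 2`, `(0 : a) ⊆ ⟨a⟩` and
`φ ≤ φ_m`, then `⟨a⟩` is `φ`-`n`-absorbing primary iff it is `n`-absorbing
primary. -/
theorem stmt_8 {R : Type*} [CommRing R] [Nontrivial R] (n : ℕ) (hn : 0 < n)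
    (a : R) (ha : ¬ IsUnit a) (m : ℕ) (hm : 2 ≤ m)
    (hann : ∀ r : R, r * a = 0 → r ∈ Ideal.span {a})
    (φ : Ideal R → Ideal R) (hφ : ∀ J : Ideal R, φ J ≤ J ^ m) :
    IsPhiNAbsorbingPrimary φ n (Ideal.span {a}) ↔
      IsNAbsorbingPrimary n (Ideal.span {a}) :=
  stmt_8_general n a m hm hann φ hφ
end

section
/- Let I be a proper ideal of R and φ a function from the set of ideals of R to itself with φ(I) ⊆ I. Then I is a φ-n-absorbing primary ideal of R if and only if the image I/φ(I) of I in the quotient ring R/φ(I) is a weakly n-absorbing primary ideal of R/φ(I). -/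
/-- A proper ideal `I` is weakly `n`-absorbing primary: whenever
`0 ≠ a₁ ⋯ a_{n+1} ∈ I`, either `a₁ ⋯ a_n ∈ I` or the product of `a_{n+1}` with
`n - 1` of `a₁, …, a_n` lies in `√I`. -/
def IsWeaklyNAbsorbingPrimary {R : Type*} [CommRing R] (n : ℕ) (I : Ideal R) : Prop :=
  I ≠ ⊤ ∧ ∀ a : Fin (n + 1) → R,
    (∏ i, a i) ≠ 0 → (∏ i, a i) ∈ I →
      ((∏ i : Fin n, a i.castSucc) ∈ I ∨
        ∃ i : Fin n, (∏ j ∈ Finset.univ.erase i.castSucc, a j) ∈ I.radical)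

/-! Every tuple of `R ⧸ φ(I)` lifts to `R`, and since `φ(I) ≤ I`, reduction modulo `φ(I)`
reflects membership in `I` and in `√I`, while it turns `∉ φ(I)` into `≠ 0`. So the two
absorbing conditions are the same statement about the lifted tuple. -/

namespace Ideal.Quotient

variable {R : Type*} [CommRing R] {J I : Ideal R}

theorem map_mk_ne_top_iff (hJI : J ≤ I) : I.map (mk J) ≠ ⊤ ↔ I ≠ ⊤ := by
  refine not_congr ⟨fun h => ?_, fun h => h ▸ Ideal.map_top _⟩
  rw [← comap_map_mk hJI, h, comap_top]

theorem mk_mem_radical_map_mk_iff (hJI : J ≤ I) {x : R} :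
    mk J x ∈ (I.map (mk J)).radical ↔ x ∈ I.radical := by
  rw [← mem_comap, comap_radical, comap_map_mk hJI]

end Ideal.Quotient

open Ideal.Quotient in
theorem stmt_9_general {R : Type*} [CommRing R] (n : ℕ)
    (φ : Ideal R → Ideal R) (I : Ideal R) (hφ : φ I ≤ I) :
    IsPhiNAbsorbingPrimary φ n I ↔
      IsWeaklyNAbsorbingPrimary n
        (I.map (Ideal.Quotient.mk (φ I))) := by
  unfold IsPhiNAbsorbingPrimary IsWeaklyNAbsorbingPrimary
  rw [map_mk_ne_top_iff hφ, (mk_surjective (I := φ I)).comp_left.forall]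
  refine and_congr_right fun _ => forall_congr' fun a => ?_
  simp only [Function.comp_apply, ← map_prod, ne_eq, eq_zero_iff_mem,
    Ideal.mem_quotient_iff_mem hφ, mk_mem_radical_map_mk_iff hφ]
  tauto

/-- Corollary 2.22: `I` is `φ`-`n`-absorbing primary iff `I/φ(I)` is a weakly
`n`-absorbing primary ideal of `R/φ(I)`. -/
theorem stmt_9 {R : Type*} [CommRing R] [Nontrivial R] (n : ℕ) (hn : 0 < n)
    (φ : Ideal R → Ideal R) (I : Ideal R) (hφ : φ I ≤ I) (hI : I ≠ ⊤) :
    IsPhiNAbsorbingPrimary φ n I ↔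
      IsWeaklyNAbsorbingPrimary n
        (I.map (Ideal.Quotient.mk (φ I))) :=
  stmt_9_general n φ I hφ
end

section
/- Let I be an ideal of R and φ a function from the set of ideals of R to itself with φ(I) ⊆ I, such that φ(I) is an n-absorbing primary ideal of R. If I is a φ-n-absorbing primary ideal of R, then I is an n-absorbing primary ideal of R. -/
theorem IsNAbsorbingPrimary.absorbs_of_le {R : Type*} [CommRing R] {n : ℕ} {I J : Ideal R}
    (hJ : IsNAbsorbingPrimary n J) (hJI : J ≤ I) (a : Fin (n + 1) → R)
    (ha : (∏ i, a i) ∈ J) :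
    (∏ i : Fin n, a i.castSucc) ∈ I ∨
      ∃ i : Fin n, (∏ j ∈ Finset.univ.erase i.castSucc, a j) ∈ I.radical := by
  rcases hJ.2 a ha with h | ⟨i, hi⟩
  · exact Or.inl (hJI h)
  · exact Or.inr ⟨i, Ideal.radical_mono hJI hi⟩

theorem stmt_11_general {R : Type*} [CommRing R] (n : ℕ)
    (φ : Ideal R → Ideal R) (I : Ideal R) (hφ : φ I ≤ I)
    (hφI : IsNAbsorbingPrimary n (φ I))
    (hI : IsPhiNAbsorbingPrimary φ n I) :
    IsNAbsorbingPrimary n I := by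
  refine ⟨hI.1, fun a ha => ?_⟩
  by_cases haφ : (∏ i, a i) ∈ φ I
  · exact hφI.absorbs_of_le hφ a haφ
  · exact hI.2 a ha haφ

/-- Proposition 2.27: if `φ(I)` is `n`-absorbing primary and `I` is
`φ`-`n`-absorbing primary, then `I` is `n`-absorbing primary. -/
theorem stmt_11 {R : Type*} [CommRing R] [Nontrivial R] (n : ℕ) (hn : 0 < n)
    (φ : Ideal R → Ideal R) (I : Ideal R) (hφ : φ I ≤ I)
    (hφI : IsNAbsorbingPrimary n (φ I))
    (hI : IsPhiNAbsorbingPrimary φ n I) :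
    IsNAbsorbingPrimary n I :=
  stmt_11_general n φ I hφ hφI hI
end

section
/- Let I be a φ-n-absorbing primary ideal of R and suppose (a₁, …, a_{n+1}) is a φ-(n+1)-tuple of I, i.e. a₁a₂⋯a_{n+1} ∈ φ(I), a₁a₂⋯a_n ∉ I, and a₁⋯âᵢ⋯a_{n+1} ∉ √I for every 1 ≤ i ≤ n. Then for every integer 1 ≤ m ≤ n and every choice of m distinct indices α₁, …, α_m ∈ {1, 2, …, n+1}, one has (∏_{j ∉ {α₁,…,α_m}} a_j) · Iᵐ ⊆ φ(I); that is, for all x₁, …, x_m ∈ I the element (∏_{j ∉ {α₁,…,α_m}} a_j) x₁x₂⋯x_m lies in φ(I). -/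
structure IsPhiTuple {R : Type*} [CommRing R] (φ : Ideal R → Ideal R) (I : Ideal R) {n : ℕ}
    (a : Fin (n + 1) → R) : Prop where
  prod_mem : (∏ i, a i) ∈ φ I
  prod_castSucc_notMem : (∏ i : Fin n, a i.castSucc) ∉ I
  prod_erase_notMem_radical :
    ∀ i : Fin n, (∏ j ∈ Finset.univ.erase i.castSucc, a j) ∉ I.radical

theorem Ideal.prod_sub_prod_mem_s12 {R ι : Type*} [CommRing R] (J : Ideal R) {t : Finset ι}
    {f g : ι → R} (h : ∀ j ∈ t, f j - g j ∈ J) :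
    (∏ j ∈ t, f j) - ∏ j ∈ t, g j ∈ J := by
  rw [← Ideal.Quotient.eq, map_prod, map_prod]
  exact Finset.prod_congr rfl fun j hj => Ideal.Quotient.eq.mpr (h j hj)

theorem Finset.prod_ite_add_eq_sum_powerset {R ι : Type*} [CommSemiring R] [Fintype ι]
    [DecidableEq ι] (s : Finset ι) (a x : ι → R) :
    ∏ j, (if j ∈ s then a j + x j else a j) =
      ∑ T ∈ s.powerset, (∏ j ∈ Tᶜ, a j) * ∏ j ∈ T, x j := by
  rw [← Finset.prod_mul_prod_compl s, Finset.prod_congr rfl fun j hj => if_pos hj,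
    Finset.prod_congr rfl fun j hj => if_neg (Finset.mem_compl.mp hj)]
  simp_rw [add_comm (a _) (x _)]
  rw [Finset.prod_add, Finset.sum_mul]
  refine Finset.sum_congr rfl fun T hT => ?_
  have hsdiff : Tᶜ \ sᶜ = s \ T := compl_sdiff_compl
  rw [← Finset.prod_sdiff (Finset.compl_subset_compl.mpr (Finset.mem_powerset.mp hT)), hsdiff]
  ring

theorem Finset.exists_prod_eq_prod_fin {M ι : Type*} [CommMonoid M] (s : Finset ι)
    (x : Fin s.card → M) :
    ∃ y : ι → M, (∀ j ∈ s, y j ∈ Set.range x) ∧ ∏ j ∈ s, y j = ∏ i, x i := by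
  classical
  refine ⟨fun j => if h : j ∈ s then x (s.equivFin ⟨j, h⟩) else 1,
    fun j hj => ⟨s.equivFin ⟨j, hj⟩, by simp [hj]⟩, ?_⟩
  rw [← Finset.prod_coe_sort, ← s.equivFin.prod_comp]
  exact Finset.prod_congr rfl fun j _ => dif_pos j.2

namespace IsPhiNAbsorbingPrimary

variable {R : Type*} [CommRing R] {φ : Ideal R → Ideal R} {n : ℕ} {I : Ideal R}
  {a : Fin (n + 1) → R}

theorem prod_mem_of_sub_mem (hI : IsPhiNAbsorbingPrimary φ n I) (hφ : φ I ≤ I)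
    (ha : IsPhiTuple φ I a) {b : Fin (n + 1) → R} (hb : ∀ j, b j - a j ∈ I) :
    ∏ j, b j ∈ φ I := by
  have hcong : ∀ t : Finset (Fin (n + 1)), ∏ j ∈ t, b j - ∏ j ∈ t, a j ∈ I :=
    fun t => I.prod_sub_prod_mem_s12 fun j _ => hb j
  by_contra hb_notMem
  have hb_mem : ∏ j, b j ∈ I := by
    simpa using I.add_mem (hcong Finset.univ) (hφ ha.prod_mem)
  rcases hI.2 b hb_mem hb_notMem with h | ⟨i, hi⟩
  · refine ha.prod_castSucc_notMem ?_
    have hcong_castSucc := I.prod_sub_prod_mem_s12 (t := Finset.univ)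
      (f := fun j : Fin n => b j.castSucc) (g := fun j => a j.castSucc) fun j _ => hb j.castSucc
    simpa using I.sub_mem h hcong_castSucc
  · refine ha.prod_erase_notMem_radical i ?_
    simpa using I.radical.sub_mem hi (I.le_radical (hcong (Finset.univ.erase i.castSucc)))

theorem prod_compl_mul_prod_mem (hI : IsPhiNAbsorbingPrimary φ n I) (hφ : φ I ≤ I)
    (ha : IsPhiTuple φ I a) (s : Finset (Fin (n + 1))) {x : Fin (n + 1) → R}
    (hx : ∀ j ∈ s, x j ∈ I) :
    (∏ j ∈ sᶜ, a j) * ∏ j ∈ s, x j ∈ φ I := by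
  induction s using Finset.strongInduction with
  | H s IH =>
    set b : Fin (n + 1) → R := fun j => if j ∈ s then a j + x j else a j
    have hb : ∀ j, b j - a j ∈ I := fun j => by
      by_cases hj : j ∈ s
      · simpa [b, hj] using hx j hj
      · simp [b, hj]
    have hexpand := s.prod_ite_add_eq_sum_powerset a x
    rw [← Finset.add_sum_erase _ _ s.mem_powerset_self] at hexpand
    have hsmaller : ∑ T ∈ s.powerset.erase s, (∏ j ∈ Tᶜ, a j) * ∏ j ∈ T, x j ∈ φ I :=
      Ideal.sum_mem _ fun T hT =>
        have hTs := Finset.mem_powerset.mp (Finset.mem_of_mem_erase hT)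
        IH T (Finset.ssubset_iff_subset_ne.mpr ⟨hTs, Finset.ne_of_mem_erase hT⟩)
          fun j hj => hx j (hTs hj)
    have hdiff := (φ I).sub_mem (hI.prod_mem_of_sub_mem hφ ha hb) hsmaller
    rwa [hexpand, add_sub_cancel_right] at hdiff

end IsPhiNAbsorbingPrimary

theorem stmt_12_general {R : Type*} [CommRing R] (n : ℕ)
    (φ : Ideal R → Ideal R) (hφ : ∀ J : Ideal R, φ J ≤ J) (I : Ideal R)
    (hI : IsPhiNAbsorbingPrimary φ n I) (a : Fin (n + 1) → R)
    (h1 : (∏ i, a i) ∈ φ I)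
    (h2 : (∏ i : Fin n, a i.castSucc) ∉ I)
    (h3 : ∀ i : Fin n, (∏ j ∈ Finset.univ.erase i.castSucc, a j) ∉ I.radical) :
    ∀ s : Finset (Fin (n + 1)), s.Nonempty → s.card ≤ n →
      ∀ x : Fin s.card → R, (∀ j, x j ∈ I) →
        (∏ j ∈ sᶜ, a j) * ∏ j, x j ∈ φ I := by
  intro s _ _ x hx
  obtain ⟨y, hy_range, hy_prod⟩ := s.exists_prod_eq_prod_fin x
  have hy : ∀ j ∈ s, y j ∈ I := fun j hj => by
    obtain ⟨i, hi⟩ := hy_range j hj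
    exact hi ▸ hx i
  rw [← hy_prod]
  exact hI.prod_compl_mul_prod_mem (hφ I) ⟨h1, h2, h3⟩ s hy

/-- Theorem 2.30: if `I` is `φ`-`n`-absorbing primary and `(a₁, …, a_{n+1})`
is a `φ`-`(n+1)`-tuple of `I`, then for every choice of `m` distinct indices
`α₁, …, α_m` (`1 ≤ m ≤ n`), `(a₁ ⋯ â_{α₁} ⋯ â_{α_m} ⋯ a_{n+1}) Iᵐ ⊆ φ(I)`;
here the set `s` of omitted indices plays the role of `{α₁, …, α_m}`. -/
theorem stmt_12 {R : Type*} [CommRing R] [Nontrivial R] (n : ℕ) (hn : 0 < n)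
    (φ : Ideal R → Ideal R) (hφ : ∀ J : Ideal R, φ J ≤ J) (I : Ideal R)
    (hI : IsPhiNAbsorbingPrimary φ n I) (a : Fin (n + 1) → R)
    (h1 : (∏ i, a i) ∈ φ I)
    (h2 : (∏ i : Fin n, a i.castSucc) ∉ I)
    (h3 : ∀ i : Fin n, (∏ j ∈ Finset.univ.erase i.castSucc, a j) ∉ I.radical) :
    ∀ s : Finset (Fin (n + 1)), s.Nonempty → s.card ≤ n →
      ∀ x : Fin s.card → R, (∀ j, x j ∈ I) →
        (∏ j ∈ sᶜ, a j) * ∏ j, x j ∈ φ I :=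
  stmt_12_general n φ hφ I hI a h1 h2 h3
end

section
/- Let I be a φ-n-absorbing primary ideal of R, where φ(I) ⊆ I, and suppose I is not an n-absorbing primary ideal of R. Then I^{n+1} ⊆ φ(I) and √I = √(φ(I)). -/
/-!
If `I` is not `n`-absorbing primary, some `a₁, …, aₙ₊₁` with product in `I` violates the
absorbing condition. Changing the `aᵢ` by elements of `I` keeps both properties, so `φ`-`n`-absorbing
primality forces every such perturbed product into `φ(I)`. An alternating sum of these products,
perturbed on the various subsets of indices, is `x₁ ⋯ xₙ₊₁` for arbitrary `xᵢ ∈ I`; hence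
`I^{n+1} ⊆ φ(I) ⊆ I`, and taking radicals gives `√I = √(φ(I))`.
-/

namespace Ideal

variable {R : Type*} [CommRing R]

theorem prod_add_sub_prod_mem {ι : Type*} (J : Ideal R) (s : Finset ι) {x : ι → R}
    (hx : ∀ i ∈ s, x i ∈ J) (a : ι → R) : ∏ i ∈ s, (a i + x i) - ∏ i ∈ s, a i ∈ J := by
  rw [← Ideal.Quotient.eq, map_prod, map_prod]
  exact Finset.prod_congr rfl fun i hi => by
    rw [map_add, Ideal.Quotient.eq_zero_iff_mem.2 (hx i hi), add_zero]

theorem prod_add_mem_iff {ι : Type*} (J : Ideal R) (s : Finset ι) {x : ι → R}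
    (hx : ∀ i ∈ s, x i ∈ J) (a : ι → R) : ∏ i ∈ s, (a i + x i) ∈ J ↔ ∏ i ∈ s, a i ∈ J := by
  rw [← Ideal.Quotient.eq_zero_iff_mem, ← Ideal.Quotient.eq_zero_iff_mem,
    Ideal.Quotient.eq.2 (J.prod_add_sub_prod_mem s hx a)]

/-- Expanding `∏ x i = ∏ ((a i + x i) - a i)` writes `∏ x i` as a signed sum of the products
`∏ i ∈ s, (a i + x i)` with the perturbation `x` switched off outside `t ⊆ s`. -/
theorem prod_mem_of_forall_piecewise_mem {ι : Type*} [DecidableEq ι] (J : Ideal R)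
    (s : Finset ι) (a x : ι → R) (h : ∀ t ⊆ s, ∏ i ∈ s, t.piecewise (a + x) a i ∈ J) :
    ∏ i ∈ s, x i ∈ J := by
  have hx : ∏ i ∈ s, x i = ∏ i ∈ s, ((a + x) i + -a i) :=
    Finset.prod_congr rfl fun i _ => by simp
  rw [hx, Finset.prod_add]
  refine J.sum_mem fun t ht => ?_
  have hts := Finset.mem_powerset.1 ht
  have hterm : (∏ i ∈ t, (a + x) i) * ∏ i ∈ s \ t, -a i
      = (-1) ^ (s \ t).card * ∏ i ∈ s, t.piecewise (a + x) a i := by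
    rw [Finset.prod_neg, Finset.prod_piecewise, Finset.inter_eq_right.2 hts]
    ring
  rw [hterm]
  exact J.mul_mem_left _ (h t hts)

theorem pow_le_of_forall_prod_mem {I J : Ideal R} {m : ℕ}
    (h : ∀ x : Fin m → R, (∀ i, x i ∈ I) → ∏ i, x i ∈ J) : I ^ m ≤ J := by
  rw [Submodule.pow_eq_span_pow_set, Submodule.span_le]
  rintro _ hy
  obtain ⟨x, rfl⟩ := Set.mem_pow.1 hy
  rw [List.prod_ofFn]
  exact h _ fun i => (x i).2

end Ideal

open Finset

section AbsorbingPrimary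

variable {R : Type*} [CommRing R] {n : ℕ}

def EscapesAbsorption (n : ℕ) (I : Ideal R) (a : Fin (n + 1) → R) : Prop :=
  (∏ i : Fin n, a i.castSucc) ∉ I ∧ ∀ i : Fin n, (∏ j ∈ univ.erase i.castSucc, a j) ∉ I.radical

theorem exists_escapesAbsorption_of_not_isNAbsorbingPrimary {I : Ideal R} (hI : I ≠ ⊤)
    (h : ¬ IsNAbsorbingPrimary n I) :
    ∃ a : Fin (n + 1) → R, (∏ i, a i) ∈ I ∧ EscapesAbsorption n I a := by
  simpa [IsNAbsorbingPrimary, hI, EscapesAbsorption] using h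

theorem EscapesAbsorption.add {I : Ideal R} {a x : Fin (n + 1) → R}
    (ha : EscapesAbsorption n I a) (hx : ∀ i, x i ∈ I) : EscapesAbsorption n I (a + x) := by
  refine ⟨fun h => ha.1 ?_, fun i h => ha.2 i ?_⟩
  · exact (I.prod_add_mem_iff univ (fun i _ => hx i.castSucc) _).1 h
  · exact (I.radical.prod_add_mem_iff _ (fun j _ => I.le_radical (hx j)) a).1 h

theorem IsPhiNAbsorbingPrimary.prod_mem_of_escapesAbsorption {φ : Ideal R → Ideal R}
    {I : Ideal R} (hI : IsPhiNAbsorbingPrimary φ n I) {a : Fin (n + 1) → R}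
    (haI : (∏ i, a i) ∈ I) (ha : EscapesAbsorption n I a) : (∏ i, a i) ∈ φ I := by
  by_contra hφ
  rcases hI.2 a haI hφ with h | ⟨i, h⟩
  exacts [ha.1 h, ha.2 i h]

theorem IsPhiNAbsorbingPrimary.prod_mem_of_forall_mem {φ : Ideal R → Ideal R} {I : Ideal R}
    (hI : IsPhiNAbsorbingPrimary φ n I) (hnot : ¬ IsNAbsorbingPrimary n I)
    (x : Fin (n + 1) → R) (hx : ∀ i, x i ∈ I) : (∏ i, x i) ∈ φ I := by
  obtain ⟨a, haI, ha⟩ := exists_escapesAbsorption_of_not_isNAbsorbingPrimary hI.1 hnot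
  refine (φ I).prod_mem_of_forall_piecewise_mem univ a x fun t _ => ?_
  have hpiece : t.piecewise (a + x) a = a + t.piecewise x 0 := by
    ext i; by_cases hi : i ∈ t <;> simp [hi]
  have hxt : ∀ i, t.piecewise x 0 i ∈ I := fun i => by
    by_cases hi : i ∈ t <;> simp [hi, hx i]
  rw [hpiece]
  refine hI.prod_mem_of_escapesAbsorption ?_ (ha.add hxt)
  exact (I.prod_add_mem_iff univ (fun i _ => hxt i) a).2 haI

end AbsorbingPrimary

theorem stmt_13_general {R : Type*} [CommRing R] (n : ℕ)
    (φ : Ideal R → Ideal R) (I : Ideal R) (hφ : φ I ≤ I)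
    (hI : IsPhiNAbsorbingPrimary φ n I)
    (hnot : ¬ IsNAbsorbingPrimary n I) :
    I ^ (n + 1) ≤ φ I ∧ I.radical = (φ I).radical := by
  have hpow : I ^ (n + 1) ≤ φ I :=
    Ideal.pow_le_of_forall_prod_mem (hI.prod_mem_of_forall_mem hnot)
  refine ⟨hpow, le_antisymm ?_ (Ideal.radical_mono hφ)⟩
  calc I.radical = (I ^ (n + 1)).radical := (Ideal.radical_pow I n.succ_ne_zero).symm
    _ ≤ (φ I).radical := Ideal.radical_mono hpow

/-- Theorem 2.31: if `I` is `φ`-`n`-absorbing primary but not `n`-absorbing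
primary, then `I^{n+1} ⊆ φ(I)` and `√I = √(φ(I))`. -/
theorem stmt_13 {R : Type*} [CommRing R] [Nontrivial R] (n : ℕ) (hn : 0 < n)
    (φ : Ideal R → Ideal R) (I : Ideal R) (hφ : φ I ≤ I)
    (hI : IsPhiNAbsorbingPrimary φ n I)
    (hnot : ¬ IsNAbsorbingPrimary n I) :
    I ^ (n + 1) ≤ φ I ∧ I.radical = (φ I).radical :=
  stmt_13_general n φ I hφ hI hnot
end

section
/- Let R be a u-ring, i.e. a commutative ring with the property that an ideal contained in a finite union of ideals must be contained in one of those ideals, and let φ be a function from the set of ideals of R to itself with φ(J) ⊆ J for every ideal J. Then a proper ideal I of R is a strongly φ-n-absorbing primary ideal of R if and only if I is a φ-n-absorbing primary ideal of R. -/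
/-- A proper ideal `I` is strongly `φ`-`n`-absorbing primary: whenever
`I₁ ⋯ I_{n+1} ⊆ I` and `I₁ ⋯ I_{n+1} ⊄ φ I`, either `I₁ ⋯ I_n ⊆ I` or the
product of `I_{n+1}` with `n - 1` of `I₁, …, I_n` is contained in `√I`. -/
def IsStronglyPhiNAbsorbingPrimary {R : Type*} [CommRing R] (φ : Ideal R → Ideal R)
    (n : ℕ) (I : Ideal R) : Prop :=
  I ≠ ⊤ ∧ ∀ J : Fin (n + 1) → Ideal R,
    (∏ i, J i) ≤ I → ¬ (∏ i, J i) ≤ φ I →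
      ((∏ i : Fin n, J i.castSucc) ≤ I ∨
        ∃ i : Fin n, (∏ j ∈ Finset.univ.erase i.castSucc, J j) ≤ I.radical)

/-- A `u`-ring: an ideal contained in a finite union of ideals is contained in
one of them. -/
def IsURing (R : Type*) [CommRing R] : Prop :=
  ∀ (s : Finset (Ideal R)) (I : Ideal R),
    (I : Set R) ⊆ (⋃ J ∈ s, (J : Set R)) → ∃ J ∈ s, I ≤ J

section

open Finset Function

variable {R : Type*} [CommRing R]

theorem Ideal.le_colon_iff_mul_le {I J K : Ideal R} : J ≤ I.colon (K : Set R) ↔ J * K ≤ I := by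
  rw [Ideal.mul_le]
  simp only [SetLike.le_def, Submodule.mem_colon, smul_eq_mul, SetLike.mem_coe]

theorem IsURing.exists_prod_le_of_forall_update {ι : Type*} [DecidableEq ι] (hu : IsURing R)
    (s : Finset (Finset ι × Ideal R)) (J : ι → Ideal R) (p : ι)
    (h : ∀ x ∈ J p, ∃ c ∈ s, ∏ j ∈ c.1, update J p (Ideal.span {x}) j ≤ c.2) :
    ∃ c ∈ s, ∏ j ∈ c.1, J j ≤ c.2 := by
  classical
  by_contra! hJ
  let colon (c : Finset ι × Ideal R) : Ideal R := c.2.colon ↑(∏ j ∈ c.1 \ {p}, J j)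
  have prod_eq_mul (c : Finset ι × Ideal R) (hp : p ∈ c.1) (L : Ideal R) :
      ∏ j ∈ c.1, update J p L j = L * ∏ j ∈ c.1 \ {p}, J j :=
    prod_update_of_mem hp J L
  have hcover : (J p : Set R) ⊆ ⋃ K ∈ (s.filter (p ∈ ·.1)).image colon, (K : Set R) := by
    intro x hx
    obtain ⟨c, hcs, hc⟩ := h x hx
    by_cases hp : p ∈ c.1
    · rw [prod_eq_mul c hp, ← Ideal.le_colon_iff_mul_le, Ideal.span_singleton_le_iff_mem] at hc
      exact Set.mem_biUnion (mem_image_of_mem colon (mem_filter.2 ⟨hcs, hp⟩)) hc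
    · rw [prod_update_of_notMem hp] at hc
      exact absurd hc (hJ c hcs)
  obtain ⟨K, hK, hJK⟩ := hu _ _ hcover
  obtain ⟨c, hc, rfl⟩ := mem_image.1 hK
  obtain ⟨hcs, hp⟩ := mem_filter.1 hc
  rw [Ideal.le_colon_iff_mul_le, ← prod_eq_mul c hp, update_eq_self] at hJK
  exact hJ c hcs hJK

theorem IsURing.exists_prod_le_of_forall_mem {ι : Type*} [Fintype ι] [DecidableEq ι]
    (hu : IsURing R) (s : Finset (Finset ι × Ideal R)) (J : ι → Ideal R)
    (h : ∀ a : ι → R, (∀ i, a i ∈ J i) → ∃ c ∈ s, ∏ j ∈ c.1, a j ∈ c.2) :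
    ∃ c ∈ s, ∏ j ∈ c.1, J j ≤ c.2 := by
  suffices ∀ S : Finset ι, ∀ J' ≤ J, (∀ i ∉ S, ∃ a, J' i = Ideal.span {a}) →
      ∃ c ∈ s, ∏ j ∈ c.1, J' j ≤ c.2 from
    this univ J le_rfl fun i hi => absurd (mem_univ i) hi
  intro S
  induction S using Finset.induction_on with
  | empty =>
    intro J' hJ' hprin
    choose a ha using fun i => hprin i (notMem_empty i)
    have hmem i : a i ∈ J i := Ideal.span_singleton_le_iff_mem _ |>.1 (ha i ▸ hJ' i)
    obtain ⟨c, hcs, hc⟩ := h a hmem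
    refine ⟨c, hcs, ?_⟩
    rwa [prod_congr rfl fun j _ => ha j, Ideal.prod_span_singleton,
      Ideal.span_singleton_le_iff_mem]
  | insert p S _ ih =>
    intro J' hJ' hprin
    refine hu.exists_prod_le_of_forall_update s J' p fun x hx => ih _ ?_ fun i hi => ?_
    · exact update_le_iff.2 ⟨(Ideal.span_singleton_le_iff_mem _).2 (hJ' p hx),
        fun j _ => hJ' j⟩
    · by_cases hip : i = p
      · exact ⟨x, hip ▸ update_self _ _ _⟩
      · rw [update_of_ne hip]
        exact hprin i (by simp [hip, hi])

variable {n : ℕ} {φ : Ideal R → Ideal R} {I : Ideal R}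

open Classical in
/-- The alternatives `(T, K)`, read as `∏_{j ∈ T} Jⱼ ≤ K`, of the absorbing conditions; the first
one is the excluded case `∏ Jⱼ ≤ φ I`. -/
noncomputable def absorbingPrimaryAlternatives (φ : Ideal R → Ideal R) (n : ℕ) (I : Ideal R) :
    Finset (Finset (Fin (n + 1)) × Ideal R) :=
  insert (univ, φ I) <| insert (univ.map Fin.castSuccEmb, I) <|
    univ.image fun i : Fin n => (univ.erase i.castSucc, I.radical)

theorem exists_mem_absorbingPrimaryAlternatives {P : Finset (Fin (n + 1)) × Ideal R → Prop} :
    (∃ c ∈ absorbingPrimaryAlternatives φ n I, P c) ↔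
      P (univ, φ I) ∨ P (univ.map Fin.castSuccEmb, I) ∨
        ∃ i : Fin n, P (univ.erase i.castSucc, I.radical) := by
  simp [absorbingPrimaryAlternatives]

theorem isPhiNAbsorbingPrimary_iff :
    IsPhiNAbsorbingPrimary φ n I ↔ I ≠ ⊤ ∧ ∀ a : Fin (n + 1) → R, ∏ i, a i ∈ I →
      ∃ c ∈ absorbingPrimaryAlternatives φ n I, ∏ j ∈ c.1, a j ∈ c.2 := by
  simp only [IsPhiNAbsorbingPrimary, exists_mem_absorbingPrimaryAlternatives, prod_map,
    Fin.coe_castSuccEmb]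
  refine and_congr_right fun _ => forall_congr' fun a => imp_congr_right fun _ => ?_
  tauto

theorem isStronglyPhiNAbsorbingPrimary_iff :
    IsStronglyPhiNAbsorbingPrimary φ n I ↔ I ≠ ⊤ ∧ ∀ J : Fin (n + 1) → Ideal R, ∏ i, J i ≤ I →
      ∃ c ∈ absorbingPrimaryAlternatives φ n I, ∏ j ∈ c.1, J j ≤ c.2 := by
  simp only [IsStronglyPhiNAbsorbingPrimary, exists_mem_absorbingPrimaryAlternatives, prod_map,
    Fin.coe_castSuccEmb]
  refine and_congr_right fun _ => forall_congr' fun J => imp_congr_right fun _ => ?_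
  tauto

end

theorem stmt_18_general {R : Type*} [CommRing R] (n : ℕ)
    (hu : IsURing R) (φ : Ideal R → Ideal R)
    (I : Ideal R) :
    IsStronglyPhiNAbsorbingPrimary φ n I ↔ IsPhiNAbsorbingPrimary φ n I := by
  rw [isStronglyPhiNAbsorbingPrimary_iff, isPhiNAbsorbingPrimary_iff]
  refine and_congr_right fun _ => ⟨fun h a ha => ?_, fun h J hJ => ?_⟩
  · obtain ⟨c, hc, hle⟩ := h (fun i => Ideal.span {a i})
      (by rwa [Ideal.prod_span_singleton, Ideal.span_singleton_le_iff_mem])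
    rw [Ideal.prod_span_singleton, Ideal.span_singleton_le_iff_mem] at hle
    exact ⟨c, hc, hle⟩
  · exact hu.exists_prod_le_of_forall_mem _ J fun a ha =>
      h a (hJ (Ideal.prod_mem_prod fun i _ => ha i))

/-- Theorem 5.4: over a `u`-ring, an ideal is strongly `φ`-`n`-absorbing
primary iff it is `φ`-`n`-absorbing primary. -/
theorem stmt_18 {R : Type*} [CommRing R] [Nontrivial R] (n : ℕ) (hn : 0 < n)
    (hu : IsURing R) (φ : Ideal R → Ideal R) (hφ : ∀ J : Ideal R, φ J ≤ J)
    (I : Ideal R) (hI : I ≠ ⊤) :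
    IsStronglyPhiNAbsorbingPrimary φ n I ↔ IsPhiNAbsorbingPrimary φ n I :=
  stmt_18_general n hu φ I
end
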